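/- arXiv:2009.09366 — 7 statements merged into one kernel-verified Lean document; each statement's English description precedes it below -/
import Mathlib

section
/- Let u : ℤ → ℝ be a square-summable sequence and let α : ℝ → ℝ be monotone with α(0) = 0 and |α(x)| ≤ C|x| for some C ≥ 0 and all x. Then for every τ ∈ ℤ, ∑_{t∈ℤ} u(t+τ)·α(u(t)) ≤ ∑_{t∈ℤ} u(t)·α(u(t)). -/
set_option maxHeartbeats 1000000 in
theorem stmt_2 (u : ℤ → ℝ) (α : ℝ → ℝ) (C : ℝ)
    (hu : Summable (fun t : ℤ => (u t) ^ 2))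
    (hmono : ∀ x₁ x₂ : ℝ, x₁ ≥ x₂ → α x₁ ≥ α x₂)
    (hα0 : α 0 = 0)
    (hC : 0 ≤ C)
    (hbdd : ∀ x : ℝ, |α x| ≤ C * |x|) :
    ∀ τ : ℤ, (∑' t : ℤ, u (t + τ) * α (u t)) ≤ ∑' t : ℤ, u t * α (u t) := by
  intro τ
  have hmα : Monotone α := fun a b h => hmono b a h
  set A : ℝ → ℝ := fun x => ∫ s in (0:ℝ)..x, α s with hA_def
  have hInt : ∀ a b : ℝ, IntervalIntegrable α MeasureTheory.volume a b :=
    fun a b => hmα.intervalIntegrable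
  -- key pointwise inequality: (x - y) * α y ≤ A x - A y
  have key : ∀ x y : ℝ, (x - y) * α y ≤ A x - A y := by
    intro x y
    have hsplit : A y + ∫ s in y..x, α s = A x :=
      intervalIntegral.integral_add_adjacent_intervals (hInt 0 y) (hInt y x)
    have : (x - y) * α y ≤ ∫ s in y..x, α s := by
      rcases le_total y x with h | h
      · have := intervalIntegral.integral_mono_on h
          (intervalIntegrable_const (c := α y)) (hInt y x)
          (fun s hs => hmα hs.1)
        simpa [smul_eq_mul, mul_comm] using this
      · have h2 := intervalIntegral.integral_mono_on h (hInt x y)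
          (intervalIntegrable_const (c := α y)) (fun s hs => hmα hs.2)
        rw [intervalIntegral.integral_symm]
        simp only [intervalIntegral.integral_const, smul_eq_mul] at h2
        nlinarith
    linarith
  -- bound on A
  have hAbdd : ∀ x : ℝ, |A x| ≤ C * x ^ 2 := by
    intro x
    have hb : ‖∫ s in (0:ℝ)..x, α s‖ ≤ C * |x| * |x - 0| := by
      apply intervalIntegral.norm_integral_le_of_norm_le_const
      intro s hs
      have hsle : |s| ≤ |x| := by
        rcases le_total (0:ℝ) x with h | h
        · rw [Set.uIoc_of_le h] at hs
          rw [abs_of_pos hs.1, abs_of_nonneg h]; exact hs.2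
        · rw [Set.uIoc_of_ge h] at hs
          rw [abs_of_nonpos hs.2, abs_of_nonpos h]; linarith [hs.1]
      calc ‖α s‖ = |α s| := rfl
        _ ≤ C * |s| := hbdd s
        _ ≤ C * |x| := by nlinarith [abs_nonneg s]
    calc |A x| ≤ C * |x| * |x - 0| := hb
      _ = C * x ^ 2 := by rw [sub_zero, ← sq_abs]; ring
  -- summability facts
  have huτ : Summable (fun t : ℤ => (u (t + τ)) ^ 2) :=
    (Equiv.addRight τ).summable_iff.mpr hu
  have hA : Summable (fun t : ℤ => A (u t)) := by
    apply Summable.of_norm_bounded (hu.mul_left C)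
    intro t; exact hAbdd (u t)
  have hAτ : Summable (fun t : ℤ => A (u (t + τ))) :=
    (Equiv.addRight τ).summable_iff.mpr hA
  have hS0 : Summable (fun t : ℤ => u t * α (u t)) := by
    apply Summable.of_norm_bounded (hu.mul_left C)
    intro t
    calc ‖u t * α (u t)‖ = |u t| * |α (u t)| := abs_mul _ _
      _ ≤ |u t| * (C * |u t|) := by
          exact mul_le_mul_of_nonneg_left (hbdd (u t)) (abs_nonneg _)
      _ = C * (u t) ^ 2 := by rw [← sq_abs]; ring
  have hSτ : Summable (fun t : ℤ => u (t + τ) * α (u t)) := by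
    apply Summable.of_norm_bounded (((huτ.add hu).mul_left (C / 2)))
    intro t
    have h1 : |α (u t)| ≤ C * |u t| := hbdd (u t)
    have h2 : ‖u (t + τ) * α (u t)‖ = |u (t + τ)| * |α (u t)| := abs_mul _ _
    rw [h2]
    nlinarith [abs_nonneg (u (t + τ)), abs_nonneg (u t), sq_abs (u (t + τ)),
      sq_abs (u t), sq_nonneg (|u (t + τ)| - |u t|)]
  -- shift invariance of tsum of A
  have hshift : (∑' t : ℤ, A (u (t + τ))) = ∑' t : ℤ, A (u t) :=
    (Equiv.addRight τ).tsum_eq (fun t => A (u t))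
  -- pointwise inequality
  have hpt : ∀ t : ℤ, u (t + τ) * α (u t) ≤
      (A (u (t + τ)) - A (u t)) + u t * α (u t) := by
    intro t
    have := key (u (t + τ)) (u t)
    nlinarith
  have hRHS : Summable (fun t : ℤ =>
      (A (u (t + τ)) - A (u t)) + u t * α (u t)) := (hAτ.sub hA).add hS0
  calc (∑' t : ℤ, u (t + τ) * α (u t))
      ≤ ∑' t : ℤ, ((A (u (t + τ)) - A (u t)) + u t * α (u t)) :=
        Summable.tsum_le_tsum hpt hSτ hRHS
    _ = ((∑' t : ℤ, A (u (t + τ))) - ∑' t : ℤ, A (u t)) +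
        ∑' t : ℤ, u t * α (u t) := by
          rw [Summable.tsum_add (hAτ.sub hA) hS0, Summable.tsum_sub hAτ hA]
    _ = ∑' t : ℤ, u t * α (u t) := by rw [hshift]; ring
end

section
/- Let u : ℤ → ℝ be a square-summable sequence and let α : ℝ → ℝ be monotone, odd, and bounded by C ≥ 0 (|α(x)| ≤ C|x|). Then for every τ ∈ ℤ, |∑_{t∈ℤ} u(t+τ)·α(u(t))| ≤ ∑_{t∈ℤ} u(t)·α(u(t)). -/
theorem stmt_3 (u : ℤ → ℝ) (α : ℝ → ℝ) (C : ℝ)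
    (hu : Summable (fun t : ℤ => (u t) ^ 2))
    (hmono : ∀ x₁ x₂ : ℝ, x₁ ≥ x₂ → α x₁ ≥ α x₂)
    (hodd : ∀ x : ℝ, α (-x) = -α x)
    (hC : 0 ≤ C)
    (hbdd : ∀ x : ℝ, |α x| ≤ C * |x|) :
    ∀ τ : ℤ, |∑' t : ℤ, u (t + τ) * α (u t)| ≤ ∑' t : ℤ, u t * α (u t) := by
  intro τ
  have hmono' : Monotone α := fun x y h => hmono y x h
  have hα0 : α 0 = 0 := by have := hodd 0; simp at this; linarith
  set Φ : ℝ → ℝ := fun x => ∫ s in (0:ℝ)..x, α s with hΦdef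
  have hint : ∀ a b : ℝ, IntervalIntegrable α MeasureTheory.volume a b :=
    fun a b => hmono'.intervalIntegrable
  have key : ∀ a b : ℝ, (a - b) * α b ≤ Φ a - Φ b := by
    intro a b
    have hΦab : Φ a - Φ b = ∫ s in b..a, α s :=
      intervalIntegral.integral_interval_sub_left (hint 0 a) (hint 0 b)
    rw [hΦab]
    rcases le_total b a with h | h
    · have h1 : ∫ _s in b..a, α b ≤ ∫ s in b..a, α s := by
        apply intervalIntegral.integral_mono_on h intervalIntegrable_const (hint b a)
        intro x hx; exact hmono' hx.1
      rw [intervalIntegral.integral_const] at h1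
      simp only [smul_eq_mul] at h1
      linarith [h1]
    · have h1 : ∫ s in a..b, α s ≤ ∫ _s in a..b, α b := by
        apply intervalIntegral.integral_mono_on h (hint a b) intervalIntegrable_const
        intro x hx; exact hmono' hx.2
      rw [intervalIntegral.integral_const] at h1
      simp only [smul_eq_mul] at h1
      rw [intervalIntegral.integral_symm]
      linarith [h1]
  have hΦ0 : Φ 0 = 0 := intervalIntegral.integral_same
  have hΦnonneg : ∀ x : ℝ, 0 ≤ Φ x := by
    intro x
    have := key x 0
    rw [hΦ0, hα0] at this; linarith
  have hΦle : ∀ x : ℝ, Φ x ≤ x * α x := by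
    intro x
    have := key 0 x
    rw [hΦ0] at this; nlinarith [this]
  have hΦeven : ∀ x : ℝ, Φ (-x) = Φ x := by
    intro x
    have h1 : ∫ s in (0:ℝ)..x, α (-s) = ∫ s in (-x)..(0:ℝ), α s := by
      simpa using intervalIntegral.integral_comp_neg (a := (0:ℝ)) (b := x) (fun s => α s)
    have h2 : ∫ s in (0:ℝ)..x, α (-s) = -Φ x := by
      simp only [hodd]
      rw [intervalIntegral.integral_neg]
    have h3 : ∫ s in (-x)..(0:ℝ), α s = -Φ (-x) := by
      rw [intervalIntegral.integral_symm]
    linarith [h1, h2, h3]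
  have hxα : ∀ x : ℝ, 0 ≤ x * α x := fun x => le_trans (hΦnonneg x) (hΦle x)
  have hbb : ∀ x : ℝ, x * α x ≤ C * x ^ 2 := by
    intro x
    calc x * α x ≤ |x * α x| := le_abs_self _
      _ = |x| * |α x| := abs_mul _ _
      _ ≤ |x| * (C * |x|) := mul_le_mul_of_nonneg_left (hbdd x) (abs_nonneg x)
      _ = C * x ^ 2 := by rw [show |x| * (C * |x|) = C * (|x| * |x|) by ring, abs_mul_abs_self x, sq]
  have hCu : Summable (fun t : ℤ => C * (u t) ^ 2) := hu.mul_left C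
  have sA : Summable (fun t : ℤ => u t * α (u t)) :=
    Summable.of_nonneg_of_le (fun t => hxα _) (fun t => hbb _) hCu
  have sΦ : Summable (fun t : ℤ => Φ (u t)) :=
    Summable.of_nonneg_of_le (fun t => hΦnonneg _)
      (fun t => (hΦle _).trans (hbb _)) hCu
  have huτ : Summable (fun t : ℤ => (u (t + τ)) ^ 2) := by
    have := (Equiv.addRight τ).summable_iff.mpr hu
    exact this
  have sΦτ : Summable (fun t : ℤ => Φ (u (t + τ))) := by
    have := (Equiv.addRight τ).summable_iff.mpr sΦ
    exact this
  have hΦτ_eq : (∑' t : ℤ, Φ (u (t + τ))) = ∑' t : ℤ, Φ (u t) := by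
    have := (Equiv.addRight τ).tsum_eq (fun t => Φ (u t))
    simpa using this
  have sS : Summable (fun t : ℤ => u (t + τ) * α (u t)) := by
    apply Summable.of_abs
    apply Summable.of_nonneg_of_le (fun t => abs_nonneg _) (fun t => ?_)
      ((huτ.add hu).mul_left C)
    rw [abs_mul]
    calc |u (t + τ)| * |α (u t)| ≤ |u (t + τ)| * (C * |u t|) :=
          mul_le_mul_of_nonneg_left (hbdd _) (abs_nonneg _)
      _ ≤ C * ((u (t + τ)) ^ 2 + (u t) ^ 2) := by
          nlinarith [sq_abs (u (t + τ)), sq_abs (u t), abs_nonneg (u (t + τ)),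
            abs_nonneg (u t), sq_nonneg (|u (t + τ)| - |u t|)]
  have sRHS : Summable (fun t : ℤ => Φ (u (t + τ)) - Φ (u t) + u t * α (u t)) :=
    (sΦτ.sub sΦ).add sA
  have hRHS : (∑' t : ℤ, (Φ (u (t + τ)) - Φ (u t) + u t * α (u t)))
      = ∑' t : ℤ, u t * α (u t) := by
    rw [Summable.tsum_add (sΦτ.sub sΦ) sA, Summable.tsum_sub sΦτ sΦ, hΦτ_eq]
    ring
  have upper : (∑' t : ℤ, u (t + τ) * α (u t)) ≤ ∑' t : ℤ, u t * α (u t) := by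
    rw [← hRHS]
    apply Summable.tsum_le_tsum _ sS sRHS
    intro t
    have h := key (u (t + τ)) (u t)
    nlinarith [h]
  have lower : -(∑' t : ℤ, u t * α (u t)) ≤ ∑' t : ℤ, u (t + τ) * α (u t) := by
    have h1 : (∑' t : ℤ, -(u (t + τ) * α (u t))) ≤ ∑' t : ℤ, u t * α (u t) := by
      rw [← hRHS]
      apply Summable.tsum_le_tsum _ sS.neg sRHS
      intro t
      have h := key (-(u (t + τ))) (u t)
      rw [hΦeven] at h
      nlinarith [h]
    rw [tsum_neg] at h1
    linarith
  exact abs_le.mpr ⟨lower, upper⟩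
end

section
/- Let u, y : ℤ → ℝ be square-summable sequences with y(t) = 0 whenever u(t) = 0. Suppose there exist functions ᾱ, α̲ : ℝ → ℝ, each monotone with value 0 at 0 and satisfying |·| ≤ C|x| bounds, such that for all t with u(t) ≠ 0: 0 ≤ α̲(u(t))/u(t) ≤ y(t)/u(t) ≤ ᾱ(u(t))/u(t). Suppose also there exists A ≥ 1 such that for all x ≠ 0, ᾱ(x)/x ≤ A·α̲(x)/x (with both quotients nonnegative). Then for every τ ∈ ℤ: ∑_{t∈ℤ} u(t+τ)·y(t) ≤ A·∑_{t∈ℤ} u(t)·y(t). -/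
theorem stmt_6 (u y : ℤ → ℝ) (αH αL : ℝ → ℝ) (C A : ℝ)
    (hu : Summable (fun t : ℤ => (u t) ^ 2))
    (hy : Summable (fun t : ℤ => (y t) ^ 2))
    (hzero : ∀ t : ℤ, u t = 0 → y t = 0)
    (hmono_hi : ∀ x₁ x₂ : ℝ, x₁ ≥ x₂ → αH x₁ ≥ αH x₂)
    (hmono_lo : ∀ x₁ x₂ : ℝ, x₁ ≥ x₂ → αL x₁ ≥ αL x₂)
    (hhi0 : αH 0 = 0) (hlo0 : αL 0 = 0)
    (hC : 0 ≤ C)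
    (hbdd_hi : ∀ x : ℝ, |αH x| ≤ C * |x|)
    (hbdd_lo : ∀ x : ℝ, |αL x| ≤ C * |x|)
    (hsector : ∀ t : ℤ, u t ≠ 0 →
      0 ≤ αL (u t) / u t ∧ αL (u t) / u t ≤ y t / u t ∧ y t / u t ≤ αH (u t) / u t)
    (hA : 1 ≤ A)
    (hratio : ∀ x : ℝ, x ≠ 0 → 0 ≤ αL x / x ∧ αH x / x ≤ A * (αL x / x)) :
    ∀ τ : ℤ, (∑' t : ℤ, u (t + τ) * y t) ≤ A * ∑' t : ℤ, u t * y t := by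
  intro τ
  have hA0 : (0:ℝ) ≤ A := le_trans zero_le_one hA
  have hmono : Monotone αL := fun x₁ x₂ h => hmono_lo x₂ x₁ h
  -- potential function Φ
  set Φ : ℝ → ℝ := fun x => ∫ s in (0:ℝ)..x, αL s with hΦdef
  have hInt : ∀ a b : ℝ, IntervalIntegrable αL MeasureTheory.volume a b := fun a b =>
    hmono.intervalIntegrable
  have hΦ0 : Φ 0 = 0 := intervalIntegral.integral_same
  have hgrad : ∀ a b : ℝ, αL b * (a - b) ≤ Φ a - Φ b := by
    intro a b
    have hsub : Φ a - Φ b = ∫ s in b..a, αL s := by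
      have h := intervalIntegral.integral_add_adjacent_intervals (hInt 0 b) (hInt b a)
      simp only [hΦdef]
      linarith
    rw [hsub]
    rcases le_total b a with h | h
    · have hle : ∫ _ in b..a, (αL b) ≤ ∫ s in b..a, αL s := by
        apply intervalIntegral.integral_mono_on h intervalIntegrable_const (hInt b a)
        intro x hx; exact hmono hx.1
      rw [intervalIntegral.integral_const] at hle
      have : (a - b) • αL b = αL b * (a - b) := by simp [smul_eq_mul, mul_comm]
      linarith [hle, this.symm.le]
    · have hle : ∫ s in a..b, αL s ≤ ∫ _ in a..b, (αL b) := by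
        apply intervalIntegral.integral_mono_on h (hInt a b) intervalIntegrable_const
        intro x hx; exact hmono hx.2
      rw [intervalIntegral.integral_const] at hle
      rw [intervalIntegral.integral_symm]
      have : (b - a) • αL b = αL b * (b - a) := by simp [smul_eq_mul, mul_comm]
      nlinarith [hle]
  have hΦnonneg : ∀ x : ℝ, 0 ≤ Φ x := by
    intro x
    have := hgrad x 0
    rw [hlo0, hΦ0] at this
    linarith
  have hΦle : ∀ x : ℝ, Φ x ≤ x * αL x := by
    intro x
    have := hgrad 0 x
    rw [hΦ0] at this
    nlinarith
  have hΦbound : ∀ x : ℝ, Φ x ≤ C * x ^ 2 := by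
    intro x
    have h1 : x * αL x ≤ |x| * |αL x| := by
      calc x * αL x ≤ |x * αL x| := le_abs_self _
        _ = |x| * |αL x| := abs_mul _ _
    have h2 : |x| * |αL x| ≤ |x| * (C * |x|) :=
      mul_le_mul_of_nonneg_left (hbdd_lo x) (abs_nonneg x)
    have h3 : |x| * (C * |x|) = C * x ^ 2 := by
      rw [← sq_abs x]; ring
    nlinarith [hΦle x, sq_abs x]
  -- pointwise key inequality
  have key : ∀ t : ℤ,
      u (t + τ) * y t ≤ A * (u t * y t) + A * Φ (u (t + τ)) - A * Φ (u t) := by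
    intro t
    set a := u (t + τ) with ha
    set b := u t with hb
    by_cases hb0 : b = 0
    · have hy0 : y t = 0 := hzero t hb0
      rw [hy0, hb0, hΦ0]
      have := hΦnonneg a
      nlinarith
    · obtain ⟨hl0, hly, hyh⟩ := hsector t hb0
      obtain ⟨_, hha⟩ := hratio b hb0
      have e3 : b * y t = b ^ 2 * (y t / b) := by field_simp
      have e4 : b * αL b = b ^ 2 * (αL b / b) := by field_simp
      have f2 : b * αL b ≤ b * y t := by
        rw [e3, e4]
        exact mul_le_mul_of_nonneg_left hly (sq_nonneg b)
      have f1 : 0 ≤ b * y t := by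
        rw [e3]
        exact mul_nonneg (sq_nonneg b) (le_trans hl0 hly)
      have f3 : Φ b ≤ b * y t := le_trans (hΦle b) f2
      by_cases hab : 0 ≤ a * b
      · have e1 : a * y t = (a * b) * (y t / b) := by field_simp
        have e2 : a * αL b = (a * b) * (αL b / b) := by field_simp
        have key1 : a * y t ≤ A * (a * αL b) := by
          rw [e1, e2]
          calc (a * b) * (y t / b) ≤ (a * b) * (A * (αL b / b)) :=
                mul_le_mul_of_nonneg_left (le_trans hyh hha) hab
            _ = A * ((a * b) * (αL b / b)) := by ring
        have key2 : αL b * (a - b) ≤ Φ a - Φ b := hgrad a b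
        nlinarith [mul_le_mul_of_nonneg_left
          (show a * αL b ≤ b * y t + Φ a - Φ b by nlinarith [key2, f2]) hA0]
      · push_neg at hab
        have e1 : a * y t = (a * b) * (y t / b) := by field_simp
        have hay : a * y t ≤ 0 := by
          rw [e1]
          exact mul_nonpos_of_nonpos_of_nonneg hab.le (le_trans hl0 hly)
        nlinarith [hΦnonneg a, mul_le_mul_of_nonneg_left f3 hA0,
          mul_le_mul_of_nonneg_left (hΦnonneg a) hA0]
  -- summability facts
  have habsle : ∀ p q : ℝ, |p * q| ≤ p ^ 2 + q ^ 2 := by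
    intro p q
    rw [abs_mul]
    nlinarith [sq_nonneg (|p| - |q|), sq_abs p, sq_abs q, abs_nonneg p, abs_nonneg q]
  have hS2 : Summable (fun t : ℤ => u t * y t) := by
    apply Summable.of_abs
    exact Summable.of_nonneg_of_le (fun t => abs_nonneg _) (fun t => habsle _ _) (hu.add hy)
  have husq' : Summable (fun t : ℤ => (u (t + τ)) ^ 2) :=
    ((Equiv.addRight τ).summable_iff (f := fun t : ℤ => (u t) ^ 2)).mpr hu
  have hS1 : Summable (fun t : ℤ => u (t + τ) * y t) := by
    apply Summable.of_abs
    exact Summable.of_nonneg_of_le (fun t => abs_nonneg _) (fun t => habsle _ _)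
      (husq'.add hy)
  have hS3 : Summable (fun t : ℤ => Φ (u t)) :=
    Summable.of_nonneg_of_le (fun t => hΦnonneg _) (fun t => hΦbound _) (hu.mul_left C)
  have hS4 : Summable (fun t : ℤ => Φ (u (t + τ))) :=
    ((Equiv.addRight τ).summable_iff (f := fun t : ℤ => Φ (u t))).mpr hS3
  have hts : (∑' t : ℤ, Φ (u (t + τ))) = ∑' t : ℤ, Φ (u t) :=
    (Equiv.addRight τ).tsum_eq (fun t : ℤ => Φ (u t))
  have hSg : Summable (fun t : ℤ =>
      A * (u t * y t) + A * Φ (u (t + τ)) - A * Φ (u t)) :=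
    ((hS2.mul_left A).add (hS4.mul_left A)).sub (hS3.mul_left A)
  calc (∑' t : ℤ, u (t + τ) * y t)
      ≤ ∑' t : ℤ, (A * (u t * y t) + A * Φ (u (t + τ)) - A * Φ (u t)) :=
        Summable.tsum_le_tsum key hS1 hSg
    _ = A * (∑' t : ℤ, u t * y t) + A * (∑' t : ℤ, Φ (u (t + τ)))
        - A * (∑' t : ℤ, Φ (u t)) := by
        rw [Summable.tsum_sub ((hS2.mul_left A).add (hS4.mul_left A)) (hS3.mul_left A),
          Summable.tsum_add (hS2.mul_left A) (hS4.mul_left A), tsum_mul_left, tsum_mul_left,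
          tsum_mul_left]
    _ = A * ∑' t : ℤ, u t * y t := by rw [hts]; ring
end

section
/- Let u, y : ℤ → ℝ be square-summable sequences with y(t) = 0 whenever u(t) = 0. Suppose there exist monotone, odd, bounded functions β̲, β̄ : ℝ → ℝ such that for all t with u(t) ≠ 0: 0 ≤ β̲(u(t))/u(t) ≤ y(t)/u(t) ≤ β̄(u(t))/u(t), and there exists B ≥ 1 such that β̄(x)/x ≤ B·β̲(x)/x for all x ≠ 0. Then for every τ ∈ ℤ: -B·∑_{t∈ℤ} u(t)·y(t) ≤ ∑_{t∈ℤ} u(t+τ)·y(t). -/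
set_option maxHeartbeats 1000000

open MeasureTheory intervalIntegral

private lemma abs_mul_le_half_sq (a b : ℝ) : |a * b| ≤ (a ^ 2 + b ^ 2) / 2 := by
  rw [abs_mul]
  nlinarith [sq_abs a, sq_abs b, sq_nonneg (|a| - |b|), abs_nonneg a, abs_nonneg b]

theorem stmt_7 (u y : ℤ → ℝ) (βL βH : ℝ → ℝ) (C B : ℝ)
    (hu : Summable (fun t : ℤ => (u t) ^ 2))
    (hy : Summable (fun t : ℤ => (y t) ^ 2))
    (hzero : ∀ t : ℤ, u t = 0 → y t = 0)
    (hmono_lo : ∀ x₁ x₂ : ℝ, x₁ ≥ x₂ → βL x₁ ≥ βL x₂)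
    (hmono_hi : ∀ x₁ x₂ : ℝ, x₁ ≥ x₂ → βH x₁ ≥ βH x₂)
    (hodd_lo : ∀ x : ℝ, βL (-x) = -βL x)
    (hodd_hi : ∀ x : ℝ, βH (-x) = -βH x)
    (hC : 0 ≤ C)
    (hbdd_lo : ∀ x : ℝ, |βL x| ≤ C * |x|)
    (hbdd_hi : ∀ x : ℝ, |βH x| ≤ C * |x|)
    (hsector : ∀ t : ℤ, u t ≠ 0 →
      0 ≤ βL (u t) / u t ∧ βL (u t) / u t ≤ y t / u t ∧ y t / u t ≤ βH (u t) / u t)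
    (hB : 1 ≤ B)
    (hratio : ∀ x : ℝ, x ≠ 0 → βH x / x ≤ B * (βL x / x)) :
    ∀ τ : ℤ, -B * (∑' t : ℤ, u t * y t) ≤ ∑' t : ℤ, u (t + τ) * y t := by
  intro τ
  have hB' : (0:ℝ) ≤ B := le_trans zero_le_one hB
  have hmL : Monotone βL := fun a b h => hmono_lo b a h
  have hL0 : βL 0 = 0 := by
    have h := hbdd_lo 0
    simp only [abs_zero, mul_zero] at h
    exact abs_eq_zero.mp (le_antisymm h (abs_nonneg _))
  have hLnn : ∀ x : ℝ, 0 ≤ x → 0 ≤ βL x := fun x hx => hL0 ▸ hmL hx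
  set F : ℝ → ℝ := fun x => ∫ s in (0:ℝ)..x, βL s with hFdef
  have hInt : ∀ a b : ℝ, IntervalIntegrable βL volume a b :=
    fun a b => hmL.intervalIntegrable
  -- key convexity inequality
  have key : ∀ a b : ℝ, βL b * (a - b) ≤ F a - F b := by
    intro a b
    have hsub : F a - F b = ∫ s in b..a, βL s :=
      intervalIntegral.integral_interval_sub_left (hInt 0 a) (hInt 0 b)
    rw [hsub]
    rcases le_total b a with h | h
    · have h1 : (∫ s in b..a, βL b) ≤ ∫ s in b..a, βL s := by
        apply intervalIntegral.integral_mono_on h intervalIntegrable_const (hInt b a)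
        intro x hx; exact hmL hx.1
      rw [intervalIntegral.integral_const, smul_eq_mul] at h1
      linarith [h1]
    · have h1 : (∫ s in a..b, βL s) ≤ ∫ s in a..b, βL b := by
        apply intervalIntegral.integral_mono_on h (hInt a b) intervalIntegrable_const
        intro x hx; exact hmL hx.2
      rw [intervalIntegral.integral_const, smul_eq_mul] at h1
      rw [intervalIntegral.integral_symm]
      linarith [h1]
  -- bounds on F
  have hFnn : ∀ x : ℝ, 0 ≤ x → 0 ≤ F x := by
    intro x hx
    apply intervalIntegral.integral_nonneg hx
    intro s hs; exact hLnn s hs.1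
  have hFle : ∀ x : ℝ, 0 ≤ x → F x ≤ C / 2 * x ^ 2 := by
    intro x hx
    have h1 : F x ≤ ∫ s in (0:ℝ)..x, C * s := by
      apply intervalIntegral.integral_mono_on hx (hInt 0 x)
        ((continuous_const.mul continuous_id).intervalIntegrable 0 x)
      intro s hs
      calc βL s ≤ |βL s| := le_abs_self _
        _ ≤ C * |s| := hbdd_lo s
        _ = C * s := by rw [abs_of_nonneg hs.1]
    have h2 : (∫ s in (0:ℝ)..x, C * s) = C * (x ^ 2 / 2) := by
      rw [intervalIntegral.integral_const_mul, integral_id]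
      ring
    rw [h2] at h1; linarith
  -- summability facts
  have hFsum : Summable (fun t : ℤ => F |u t|) := by
    apply Summable.of_nonneg_of_le (fun t => hFnn _ (abs_nonneg _))
      (fun t => le_trans (hFle _ (abs_nonneg _)) (le_of_eq (by rw [sq_abs])))
    exact hu.mul_left (C / 2)
  have hFsum' : Summable (fun t : ℤ => F |u (t + τ)|) :=
    (Equiv.addRight τ).summable_iff.mpr hFsum
  have hu' : Summable (fun t : ℤ => (u (t + τ)) ^ 2) :=
    (Equiv.addRight τ).summable_iff.mpr hu
  have hUY : Summable (fun t : ℤ => u t * y t) := by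
    apply Summable.of_abs
    apply Summable.of_nonneg_of_le (fun t => abs_nonneg _)
      (fun t => abs_mul_le_half_sq _ _)
    exact (hu.add hy).div_const 2
  have hG : Summable (fun t : ℤ => u (t + τ) * y t) := by
    apply Summable.of_abs
    apply Summable.of_nonneg_of_le (fun t => abs_nonneg _)
      (fun t => abs_mul_le_half_sq _ _)
    exact (hu'.add hy).div_const 2
  -- pointwise inequality
  have hpt : ∀ t : ℤ,
      (-B) * F |u (t + τ)| + B * F |u t| + (-B) * (u t * y t) ≤ u (t + τ) * y t := by
    intro t
    set a := |u (t + τ)| with ha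
    set b := |u t| with hb
    have hodd_prod : u t * βL (u t) = b * βL b := by
      rcases le_or_gt 0 (u t) with h | h
      · rw [hb, abs_of_nonneg h]
      · rw [hb, abs_of_neg h]
        have := hodd_lo (u t)
        have h2 : βL (-u t) = -βL (u t) := this
        rw [h2]; ring
    have hyb : |y t| ≤ B * βL b := by
      by_cases h : u t = 0
      · rw [hzero t h]
        simp only [abs_zero]
        have : b = 0 := by rw [hb, h, abs_zero]
        rw [this, hL0, mul_zero]
      · obtain ⟨h1, h2, h3⟩ := hsector t h
        have h4 := hratio (u t) h
        have h5 : y t / u t ≤ B * (βL (u t) / u t) := le_trans h3 h4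
        have h6 : 0 ≤ y t / u t := le_trans h1 h2
        have heq : βL b = (βL (u t) / u t) * b := by
          rcases lt_or_gt_of_ne h with hneg | hpos
          · rw [hb, abs_of_neg hneg]
            have h7 : βL (-u t) = -βL (u t) := hodd_lo (u t)
            rw [h7]; field_simp
          · rw [hb, abs_of_pos hpos]; field_simp
        have heqy : |y t| = (y t / u t) * b := by
          have hyrw : y t = (y t / u t) * u t := by field_simp
          rw [hb]
          conv_lhs => rw [hyrw]
          rw [abs_mul, abs_of_nonneg h6]
        rw [heqy, heq]
        calc (y t / u t) * b ≤ (B * (βL (u t) / u t)) * b :=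
              mul_le_mul_of_nonneg_right h5 (abs_nonneg _)
          _ = B * (βL (u t) / u t * b) := by ring
    have hbb : b * βL b ≤ u t * y t := by
      by_cases h : u t = 0
      · rw [h, hzero t h]
        have : b = 0 := by rw [hb, h, abs_zero]
        rw [this, hL0]
      · obtain ⟨h1, h2, h3⟩ := hsector t h
        have h4 : (βL (u t) / u t) * (u t) ^ 2 ≤ (y t / u t) * (u t) ^ 2 :=
          mul_le_mul_of_nonneg_right h2 (sq_nonneg _)
        have e1 : (βL (u t) / u t) * (u t) ^ 2 = u t * βL (u t) := by field_simp
        have e2 : (y t / u t) * (u t) ^ 2 = u t * y t := by field_simp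
        rw [e1, e2] at h4
        rw [← hodd_prod]; exact h4
    have keyt := key a b
    have h0 : -(a * |y t|) ≤ u (t + τ) * y t := by
      rw [ha, ← abs_mul]
      exact neg_abs_le _
    have ha0 : (0:ℝ) ≤ a := abs_nonneg _
    nlinarith [mul_le_mul_of_nonneg_left hyb ha0,
      mul_le_mul_of_nonneg_left keyt hB',
      mul_le_mul_of_nonneg_left hbb hB']
  -- sum everything up
  have hf_sum : Summable (fun t : ℤ =>
      (-B) * F |u (t + τ)| + B * F |u t| + (-B) * (u t * y t)) :=
    ((hFsum'.mul_left (-B)).add (hFsum.mul_left B)).add (hUY.mul_left (-B))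
  have hts := Summable.tsum_le_tsum hpt hf_sum hG
  have hshift : (∑' t : ℤ, F |u (t + τ)|) = ∑' t : ℤ, F |u t| :=
    (Equiv.addRight τ).tsum_eq (fun t => F |u t|)
  have heval : (∑' t : ℤ, ((-B) * F |u (t + τ)| + B * F |u t| + (-B) * (u t * y t)))
      = -B * (∑' t : ℤ, u t * y t) := by
    rw [Summable.tsum_add ((hFsum'.mul_left (-B)).add (hFsum.mul_left B)) (hUY.mul_left (-B)),
      Summable.tsum_add (hFsum'.mul_left (-B)) (hFsum.mul_left B),
      tsum_mul_left, tsum_mul_left, tsum_mul_left, hshift]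
    ring
  rw [heval] at hts
  exact hts
end

section
/- Let u, y : ℤ → ℝ be square-summable sequences satisfying the hypotheses guaranteeing that for all τ ∈ ℤ: -B·S₀ ≤ S_τ ≤ A·S₀, where S_τ = ∑_t u(t+τ)·y(t), S₀ ≥ 0, and 1 ≤ A ≤ B. Let h₊, h₋ : ℤ → ℝ be nonnegative absolutely summable sequences with h₊(0) = h₋(0) = 0 and A·‖h₊‖₁ + B·‖h₋‖₁ < 1. Then ∑_{t∈ℤ} ((u - h₊*u + h₋*u)(t))·y(t) ≥ (1 - A·‖h₊‖₁ - B·‖h₋‖₁)·S₀ ≥ 0, where * denotes convolution (h*u)(t) = ∑_s h(s)·u(t-s). -/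
private lemma conv_key (h u y : ℤ → ℝ) (hh : Summable fun s : ℤ => |h s|)
    (hu : Summable fun t : ℤ => (u t) ^ 2) (hy : Summable fun t : ℤ => (y t) ^ 2) :
    Summable (fun t : ℤ => (∑' s : ℤ, h s * u (t - s)) * y t) ∧
    (∑' t : ℤ, (∑' s : ℤ, h s * u (t - s)) * y t)
      = ∑' s : ℤ, h s * (∑' t : ℤ, u (t + (-s)) * y t) := by
  have habs : ∀ a b : ℝ, |a * b| ≤ (a ^ 2 + b ^ 2) / 2 := by
    intro a b
    rw [abs_mul]; nlinarith [sq_nonneg (|a| - |b|), sq_abs a, sq_abs b]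
  have hush : ∀ s : ℤ, Summable (fun t : ℤ => (u (t - s)) ^ 2) := by
    intro s
    have := ((Equiv.subRight s).summable_iff (f := fun t => (u t) ^ 2)).mpr hu
    exact this
  have husheq : ∀ s : ℤ, (∑' t : ℤ, (u (t - s)) ^ 2) = ∑' t : ℤ, (u t) ^ 2 := by
    intro s
    have := (Equiv.subRight s).tsum_eq (f := fun t => (u t) ^ 2)
    simpa using this
  set C : ℝ := (∑' t : ℤ, (u t) ^ 2) + (∑' t : ℤ, (y t) ^ 2) with hC
  -- pointwise bound
  have hbd : ∀ s t : ℤ, |h s * u (t - s) * y t| ≤ |h s| * (((u (t - s)) ^ 2 + (y t) ^ 2) / 2) := by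
    intro s t
    rw [mul_assoc, abs_mul]
    exact mul_le_mul_of_nonneg_left (habs _ _) (abs_nonneg _)
  have hRHSsum : ∀ s : ℤ, Summable (fun t : ℤ => |h s| * (((u (t - s)) ^ 2 + (y t) ^ 2) / 2)) := by
    intro s
    exact (((hush s).add hy).div_const 2).mul_left _
  have hF : ∀ s : ℤ, Summable (fun t : ℤ => |h s * u (t - s) * y t|) := by
    intro s
    exact Summable.of_nonneg_of_le (fun t => abs_nonneg _) (hbd s) (hRHSsum s)
  have hFt_bound : ∀ s : ℤ, (∑' t : ℤ, |h s * u (t - s) * y t|) ≤ |h s| * (C / 2) := by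
    intro s
    have h1 : (∑' t : ℤ, |h s * u (t - s) * y t|)
        ≤ ∑' t : ℤ, |h s| * (((u (t - s)) ^ 2 + (y t) ^ 2) / 2) :=
      Summable.tsum_le_tsum (hbd s) (hF s) (hRHSsum s)
    have h2 : (∑' t : ℤ, |h s| * (((u (t - s)) ^ 2 + (y t) ^ 2) / 2)) = |h s| * (C / 2) := by
      rw [tsum_mul_left]
      congr 1
      rw [tsum_div_const, Summable.tsum_add (hush s) hy, husheq s]
    linarith [h1, h2.le, h2.ge]
  have hFabs : Summable (fun p : ℤ × ℤ => |h p.1 * u (p.2 - p.1) * y p.2|) := by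
    apply (summable_prod_of_nonneg (fun p => abs_nonneg _)).mpr
    refine ⟨fun s => hF s, ?_⟩
    exact Summable.of_nonneg_of_le (fun s => tsum_nonneg fun t => abs_nonneg _)
      hFt_bound (hh.mul_right _)
  have hFprod : Summable (fun p : ℤ × ℤ => h p.1 * u (p.2 - p.1) * y p.2) :=
    summable_abs_iff.mp hFabs
  -- swapped abs summable
  have hFabs' : Summable (fun p : ℤ × ℤ => |h p.2 * u (p.1 - p.2) * y p.1|) := by
    have := ((Equiv.prodComm ℤ ℤ).summable_iff
      (f := fun p : ℤ × ℤ => |h p.1 * u (p.2 - p.1) * y p.2|)).mpr hFabs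
    exact this
  have hmarg : Summable (fun t : ℤ => ∑' s : ℤ, |h s * u (t - s) * y t|) :=
    ((summable_prod_of_nonneg (fun p => abs_nonneg _)).mp hFabs').2
  have hper_t : ∀ t : ℤ, Summable (fun s : ℤ => |h s * u (t - s) * y t|) := by
    intro t
    exact ((summable_prod_of_nonneg (fun p => abs_nonneg _)).mp hFabs').1 t
  have hsum_inner : ∀ t : ℤ, Summable (fun s : ℤ => h s * u (t - s) * y t) :=
    fun t => summable_abs_iff.mp (hper_t t)
  -- rewrite target function
  have hfun : ∀ t : ℤ, (∑' s : ℤ, h s * u (t - s)) * y t = ∑' s : ℤ, h s * u (t - s) * y t := by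
    intro t
    rw [← tsum_mul_right]
  have hsum_target : Summable (fun t : ℤ => (∑' s : ℤ, h s * u (t - s)) * y t) := by
    apply Summable.of_norm_bounded hmarg
    intro t
    have h1 : Summable fun s : ℤ => ‖h s * u (t - s) * y t‖ := by
      simpa only [Real.norm_eq_abs] using hper_t t
    have h2 := norm_tsum_le_tsum_norm h1
    simp only [Real.norm_eq_abs] at h2
    rw [hfun t, Real.norm_eq_abs]
    exact h2
  refine ⟨hsum_target, ?_⟩
  calc (∑' t : ℤ, (∑' s : ℤ, h s * u (t - s)) * y t)
      = ∑' t : ℤ, ∑' s : ℤ, h s * u (t - s) * y t := tsum_congr hfun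
    _ = ∑' s : ℤ, ∑' t : ℤ, h s * u (t - s) * y t :=
        Summable.tsum_comm' hFprod (fun s => summable_abs_iff.mp (hF s)) hsum_inner
    _ = ∑' s : ℤ, h s * (∑' t : ℤ, u (t - s) * y t) := by
        refine tsum_congr fun s => ?_
        simp_rw [mul_assoc]
        rw [tsum_mul_left]
    _ = ∑' s : ℤ, h s * (∑' t : ℤ, u (t + (-s)) * y t) := by
        simp_rw [sub_eq_add_neg]
theorem stmt_8 (u y hp hm : ℤ → ℝ) (A B : ℝ)
    (hu : Summable (fun t : ℤ => (u t) ^ 2))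
    (hy : Summable (fun t : ℤ => (y t) ^ 2))
    (hA : 1 ≤ A) (hAB : A ≤ B)
    (hS0 : 0 ≤ ∑' t : ℤ, u t * y t)
    (hshift : ∀ τ : ℤ,
      -B * (∑' t : ℤ, u t * y t) ≤ (∑' t : ℤ, u (t + τ) * y t) ∧
      (∑' t : ℤ, u (t + τ) * y t) ≤ A * ∑' t : ℤ, u t * y t)
    (hpnn : ∀ t : ℤ, 0 ≤ hp t) (hmnn : ∀ t : ℤ, 0 ≤ hm t)
    (hp_sum : Summable (fun t : ℤ => |hp t|))
    (hm_sum : Summable (fun t : ℤ => |hm t|))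
    (hp0 : hp 0 = 0) (hm0 : hm 0 = 0)
    (hnorm : A * (∑' t : ℤ, |hp t|) + B * (∑' t : ℤ, |hm t|) < 1) :
    (∑' t : ℤ, (u t - (∑' s : ℤ, hp s * u (t - s)) + (∑' s : ℤ, hm s * u (t - s))) * y t)
      ≥ (1 - A * (∑' t : ℤ, |hp t|) - B * (∑' t : ℤ, |hm t|)) * (∑' t : ℤ, u t * y t) ∧
    (1 - A * (∑' t : ℤ, |hp t|) - B * (∑' t : ℤ, |hm t|)) * (∑' t : ℤ, u t * y t) ≥ 0 := by
  set S0 : ℝ := ∑' t : ℤ, u t * y t with hS0def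
  set Hp : ℝ := ∑' t : ℤ, |hp t| with hHp
  set Hm : ℝ := ∑' t : ℤ, |hm t| with hHm
  have hHpnn : 0 ≤ Hp := tsum_nonneg fun t => abs_nonneg _
  have hHmnn : 0 ≤ Hm := tsum_nonneg fun t => abs_nonneg _
  obtain ⟨hPsum, hPeq⟩ := conv_key hp u y hp_sum hu hy
  obtain ⟨hQsum, hQeq⟩ := conv_key hm u y hm_sum hu hy
  -- summability of u*y
  have huy : Summable fun t : ℤ => u t * y t := by
    rw [← summable_abs_iff]
    apply Summable.of_nonneg_of_le (fun t => abs_nonneg _)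
      (fun t => ?_) ((hu.add hy).div_const 2)
    rw [abs_mul]; nlinarith [sq_nonneg (|u t| - |y t|), sq_abs (u t), sq_abs (y t)]
  -- shifted correlation bounds
  have hSb : ∀ τ : ℤ, |∑' t : ℤ, u (t + τ) * y t| ≤ B * S0 := by
    intro τ
    have h1 := (hshift τ).1
    have h2 := (hshift τ).2
    have : A * S0 ≤ B * S0 := mul_le_mul_of_nonneg_right hAB hS0
    rw [abs_le]; constructor <;> [linarith; linarith]
  have hBS0nn : 0 ≤ B * S0 := mul_nonneg (by linarith) hS0
  -- summability of s ↦ h s * S(-s)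
  have hSp : Summable fun s : ℤ => hp s * (∑' t : ℤ, u (t + (-s)) * y t) := by
    apply Summable.of_norm_bounded (hp_sum.mul_right (B * S0))
    intro s
    rw [Real.norm_eq_abs, abs_mul]
    exact mul_le_mul_of_nonneg_left (hSb (-s)) (abs_nonneg _)
  have hSm : Summable fun s : ℤ => hm s * (∑' t : ℤ, u (t + (-s)) * y t) := by
    apply Summable.of_norm_bounded (hm_sum.mul_right (B * S0))
    intro s
    rw [Real.norm_eq_abs, abs_mul]
    exact mul_le_mul_of_nonneg_left (hSb (-s)) (abs_nonneg _)
  have hp_sum' : Summable hp := by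
    have : (fun s : ℤ => |hp s|) = hp := funext fun s => abs_of_nonneg (hpnn s)
    rwa [this] at hp_sum
  have hm_sum' : Summable hm := by
    have : (fun s : ℤ => |hm s|) = hm := funext fun s => abs_of_nonneg (hmnn s)
    rwa [this] at hm_sum
  have hHp' : Hp = ∑' s : ℤ, hp s := tsum_congr fun s => abs_of_nonneg (hpnn s)
  have hHm' : Hm = ∑' s : ℤ, hm s := tsum_congr fun s => abs_of_nonneg (hmnn s)
  -- bound X = ∑ hp s * S(-s)
  have hX : (∑' s : ℤ, hp s * (∑' t : ℤ, u (t + (-s)) * y t)) ≤ Hp * (A * S0) := by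
    have h1 : (∑' s : ℤ, hp s * (∑' t : ℤ, u (t + (-s)) * y t))
        ≤ ∑' s : ℤ, hp s * (A * S0) :=
      Summable.tsum_le_tsum (fun s => mul_le_mul_of_nonneg_left ((hshift (-s)).2) (hpnn s))
        hSp (hp_sum'.mul_right _)
    rw [tsum_mul_right, ← hHp'] at h1
    exact h1
  -- bound Y = ∑ hm s * S(-s)
  have hY : -(Hm * (B * S0)) ≤ ∑' s : ℤ, hm s * (∑' t : ℤ, u (t + (-s)) * y t) := by
    have h1 : (∑' s : ℤ, hm s * (-B * S0))
        ≤ ∑' s : ℤ, hm s * (∑' t : ℤ, u (t + (-s)) * y t) :=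
      Summable.tsum_le_tsum (fun s => mul_le_mul_of_nonneg_left ((hshift (-s)).1) (hmnn s))
        (hm_sum'.mul_right _) hSm
    rw [tsum_mul_right, ← hHm'] at h1
    nlinarith [h1]
  -- split the main sum
  have hsplit : (∑' t : ℤ, (u t - (∑' s : ℤ, hp s * u (t - s)) + (∑' s : ℤ, hm s * u (t - s))) * y t)
      = S0 - (∑' t : ℤ, (∑' s : ℤ, hp s * u (t - s)) * y t)
          + (∑' t : ℤ, (∑' s : ℤ, hm s * u (t - s)) * y t) := by
    have : ∀ t : ℤ, (u t - (∑' s : ℤ, hp s * u (t - s)) + (∑' s : ℤ, hm s * u (t - s))) * y t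
        = (u t * y t - (∑' s : ℤ, hp s * u (t - s)) * y t)
          + (∑' s : ℤ, hm s * u (t - s)) * y t := by
      intro t; ring
    rw [tsum_congr this, Summable.tsum_add (huy.sub hPsum) hQsum, Summable.tsum_sub huy hPsum]
  have key : (∑' t : ℤ, (u t - (∑' s : ℤ, hp s * u (t - s)) + (∑' s : ℤ, hm s * u (t - s))) * y t)
      ≥ (1 - A * Hp - B * Hm) * S0 := by
    rw [hsplit, hPeq, hQeq]
    nlinarith [hX, hY]
  refine ⟨key, ?_⟩
  have hfac : 0 ≤ 1 - A * Hp - B * Hm := by linarith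
  exact mul_nonneg hfac hS0
end

section
/- Let α : ℝ → ℝ be slope-restricted on [0, s] with s > 0, i.e., 0 ≤ (α(x₁) - α(x₂))/(x₁ - x₂) ≤ s for all x₁ ≠ x₂, and with α(0) = 0. Let k > s. Then the map g : ℝ → ℝ, g(x) = x - α(x)/k, is strictly increasing and bijective, and the function α_k = α ∘ g⁻¹ is monotone and slope-restricted on [0, ks/(k-s)]. -/
theorem stmt_9 (α : ℝ → ℝ) (s k : ℝ)
    (hs : 0 < s)
    (hslope : ∀ x₁ x₂ : ℝ, x₁ ≠ x₂ →
      0 ≤ (α x₁ - α x₂) / (x₁ - x₂) ∧ (α x₁ - α x₂) / (x₁ - x₂) ≤ s)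
    (hα0 : α 0 = 0)
    (hk : k > s) :
    StrictMono (fun x : ℝ => x - α x / k) ∧
    Function.Bijective (fun x : ℝ => x - α x / k) ∧
    Monotone (α ∘ Function.invFun (fun x : ℝ => x - α x / k)) ∧
    (∀ x₁ x₂ : ℝ, x₁ ≠ x₂ →
      0 ≤ ((α ∘ Function.invFun (fun x : ℝ => x - α x / k)) x₁ -
            (α ∘ Function.invFun (fun x : ℝ => x - α x / k)) x₂) / (x₁ - x₂) ∧
      ((α ∘ Function.invFun (fun x : ℝ => x - α x / k)) x₁ -
            (α ∘ Function.invFun (fun x : ℝ => x - α x / k)) x₂) / (x₁ - x₂)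
        ≤ k * s / (k - s)) := by
  have hk0 : 0 < k := hs.trans hk
  have hks : 0 < k - s := sub_pos.mpr hk
  set g : ℝ → ℝ := fun x => x - α x / k with hgdef
  -- increment bounds
  have hincr : ∀ x₁ x₂ : ℝ, x₂ < x₁ → 0 ≤ α x₁ - α x₂ ∧ α x₁ - α x₂ ≤ s * (x₁ - x₂) := by
    intro x₁ x₂ h
    have hd : 0 < x₁ - x₂ := sub_pos.mpr h
    obtain ⟨h1, h2⟩ := hslope x₁ x₂ (ne_of_gt h)
    constructor
    · have := mul_nonneg h1 hd.le
      rwa [div_mul_cancel₀ _ hd.ne'] at this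
    · exact (div_le_iff₀ hd).mp h2
  -- strict mono
  have hg : StrictMono g := by
    intro a b hab
    obtain ⟨h1, h2⟩ := hincr b a hab
    have h4 : (α b - α a) / k < b - a := by
      rw [div_lt_iff₀ hk0]
      nlinarith
    rw [sub_div] at h4
    simp only [hgdef]
    linarith
  -- Lipschitz / continuity
  have hlip : ∀ x y : ℝ, |α x - α y| ≤ s * |x - y| := by
    intro x y
    rcases lt_trichotomy x y with h | h | h
    · obtain ⟨h1, h2⟩ := hincr y x h
      rw [abs_sub_comm, abs_of_nonneg h1, abs_sub_comm, abs_of_pos (sub_pos.mpr h)]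
      linarith
    · simp [h]
    · obtain ⟨h1, h2⟩ := hincr x y h
      rw [abs_of_nonneg h1, abs_of_pos (sub_pos.mpr h)]
      linarith
  have hcont : Continuous α := by
    have : LipschitzWith (Real.toNNReal s) α := by
      apply LipschitzWith.of_dist_le_mul
      intro x y
      rw [Real.dist_eq, Real.dist_eq, Real.coe_toNNReal _ hs.le]
      exact hlip x y
    exact this.continuous
  have hgcont : Continuous g := continuous_id.sub (hcont.div_const k)
  -- growth bounds
  have hc : 0 < 1 - s / k := by
    rw [sub_pos, div_lt_one hk0]; exact hk
  have hbound_pos : ∀ x : ℝ, 0 ≤ x → (1 - s / k) * x ≤ g x := by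
    intro x hx
    rcases eq_or_lt_of_le hx with h | h
    · simp [hgdef, ← h, hα0]
    · obtain ⟨h1, h2⟩ := hincr x 0 h
      simp only [hα0, sub_zero] at h1 h2
      have h3 : α x / k ≤ s * x / k := (div_le_div_iff_of_pos_right hk0).mpr h2
      have h4 : (1 - s / k) * x = x - s * x / k := by ring
      simp only [hgdef]
      rw [h4]
      linarith
  have hbound_neg : ∀ x : ℝ, x ≤ 0 → g x ≤ (1 - s / k) * x := by
    intro x hx
    rcases eq_or_lt_of_le hx with h | h
    · simp [hgdef, h, hα0]
    · obtain ⟨h1, h2⟩ := hincr 0 x h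
      simp only [hα0, zero_sub] at h1 h2
      have h3 : s * x / k ≤ α x / k := by
        apply (div_le_div_iff_of_pos_right hk0).mpr
        nlinarith
      have h4 : (1 - s / k) * x = x - s * x / k := by ring
      simp only [hgdef]
      rw [h4]
      linarith
  have htop : Filter.Tendsto g Filter.atTop Filter.atTop := by
    apply Filter.tendsto_atTop_mono' _ _ (Filter.Tendsto.const_mul_atTop hc Filter.tendsto_id)
    filter_upwards [Filter.eventually_ge_atTop (0 : ℝ)] with x hx
    exact hbound_pos x hx
  have hbot : Filter.Tendsto g Filter.atBot Filter.atBot := by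
    apply Filter.tendsto_atBot_mono' _ _ (Filter.Tendsto.const_mul_atBot hc Filter.tendsto_id)
    filter_upwards [Filter.eventually_le_atBot (0 : ℝ)] with x hx
    exact hbound_neg x hx
  have hgsurj : Function.Surjective g := Continuous.surjective hgcont htop hbot
  have hbij : Function.Bijective g := ⟨hg.injective, hgsurj⟩
  set h : ℝ → ℝ := Function.invFun g with hhdef
  have hrinv : ∀ y, g (h y) = y := fun y => Function.invFun_eq (hgsurj y)
  -- key slope estimate
  have key : ∀ y₁ y₂ : ℝ, y₂ < y₁ →
      0 ≤ (α (h y₁) - α (h y₂)) / (y₁ - y₂) ∧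
      (α (h y₁) - α (h y₂)) / (y₁ - y₂) ≤ k * s / (k - s) := by
    intro y₁ y₂ hy
    set x₁ := h y₁ with hx1
    set x₂ := h y₂ with hx2
    have hx : x₂ < x₁ := by
      by_contra hle
      push_neg at hle
      have := hg.monotone hle
      rw [hrinv, hrinv] at this
      linarith
    obtain ⟨h1, h2⟩ := hincr x₁ x₂ hx
    have hd : 0 < x₁ - x₂ := sub_pos.mpr hx
    have hyd : 0 < y₁ - y₂ := sub_pos.mpr hy
    have hyeq : y₁ - y₂ = (x₁ - x₂) - (α x₁ - α x₂) / k := by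
      have e1 : x₁ - α x₁ / k = y₁ := hrinv y₁
      have e2 : x₂ - α x₂ / k = y₂ := hrinv y₂
      rw [← e1, ← e2]
      ring
    constructor
    · exact div_nonneg h1 hyd.le
    · rw [div_le_div_iff₀ hyd hks, hyeq]
      have e : (α x₁ - α x₂) / k * k = α x₁ - α x₂ := div_mul_cancel₀ _ hk0.ne'
      nlinarith [mul_le_mul_of_nonneg_left h2 hk0.le]
  have symm_div : ∀ (a b y₁ y₂ : ℝ), (a - b) / (y₁ - y₂) = (b - a) / (y₂ - y₁) := by
    intro a b y₁ y₂
    rw [← neg_sub b a, ← neg_sub y₂ y₁, neg_div_neg_eq]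
  refine ⟨hg, hbij, ?_, ?_⟩
  · intro a b hab
    rcases eq_or_lt_of_le hab with hEq | hlt
    · rw [hEq]
    · obtain ⟨hnn, _⟩ := key b a hlt
      have hyd : 0 < b - a := sub_pos.mpr hlt
      simp only [Function.comp_apply]
      have := mul_nonneg hnn hyd.le
      rw [div_mul_cancel₀ _ hyd.ne'] at this
      linarith
  · intro y₁ y₂ hne
    simp only [Function.comp_apply]
    rcases lt_or_gt_of_ne hne with hlt | hgt
    · rw [symm_div (α (h y₁)) (α (h y₂)) y₁ y₂]
      exact key y₂ y₁ hlt
    · exact key y₁ y₂ hgt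
end

section
/- Let α̲, ᾱ : ℝ → ℝ be slope-restricted on [0, s] with α̲(0) = ᾱ(0) = 0 and α̲(x)/x ≤ ᾱ(x)/x for all x ≠ 0 (with both quotients in [0, s]). Let k > s and define g̲(x) = x - α̲(x)/k, ḡ(x) = x - ᾱ(x)/k, α̲_k = α̲ ∘ g̲⁻¹, ᾱ_k = ᾱ ∘ ḡ⁻¹. Suppose u, y ∈ ℝ with u > 0 and α̲(u) ≤ y ≤ ᾱ(u). Then 0 ≤ α̲_k(u - y/k)/(u - y/k) ≤ y/(u - y/k) ≤ ᾱ_k(u - y/k)/(u - y/k), where u - y/k > 0. -/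
open Filter

lemma aux_ub (α : ℝ → ℝ) (s : ℝ)
    (hslope : ∀ x₁ x₂ : ℝ, x₁ ≠ x₂ →
      0 ≤ (α x₁ - α x₂) / (x₁ - x₂) ∧ (α x₁ - α x₂) / (x₁ - x₂) ≤ s) :
    ∀ x₁ x₂ : ℝ, x₂ ≤ x₁ → α x₁ - α x₂ ≤ s * (x₁ - x₂) := by
  intro x₁ x₂ h
  rcases eq_or_lt_of_le h with rfl | h
  · simp
  · have h2 := (hslope x₁ x₂ (ne_of_gt h)).2
    have hpos : 0 < x₁ - x₂ := by linarith
    nlinarith [div_mul_cancel₀ (α x₁ - α x₂) (ne_of_gt hpos)]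

lemma aux_key (α : ℝ → ℝ) (s k : ℝ)
    (hslope : ∀ x₁ x₂ : ℝ, x₁ ≠ x₂ →
      0 ≤ (α x₁ - α x₂) / (x₁ - x₂) ∧ (α x₁ - α x₂) / (x₁ - x₂) ≤ s)
    (h0 : α 0 = 0) (hk : s < k) (hs : 0 ≤ s) :
    Function.Surjective (fun z : ℝ => z - α z / k) ∧
      StrictMono (fun z : ℝ => z - α z / k) := by
  have hk0 : 0 < k := lt_of_le_of_lt hs hk
  have hub := aux_ub α s hslope
  have hlb : ∀ x₁ x₂ : ℝ, x₂ ≤ x₁ → 0 ≤ α x₁ - α x₂ := by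
    intro x₁ x₂ h
    rcases eq_or_lt_of_le h with rfl | h
    · simp
    · have h1 := (hslope x₁ x₂ (ne_of_gt h)).1
      have hpos : 0 < x₁ - x₂ := by linarith
      nlinarith [div_mul_cancel₀ (α x₁ - α x₂) (ne_of_gt hpos)]
  have hmono : StrictMono (fun z : ℝ => z - α z / k) := by
    intro a b hab
    have h1 := hub b a (le_of_lt hab)
    simp only
    have : (α b - α a) / k < b - a := by
      rw [div_lt_iff₀ hk0]; nlinarith
    linarith [this, sub_div (α b) (α a) k]
    -- goal: a - α a / k < b - α b / k
  have hlip : LipschitzWith ⟨s, hs⟩ α := by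
    apply LipschitzWith.of_dist_le_mul
    intro x y
    rw [Real.dist_eq, Real.dist_eq]
    rcases le_total y x with h | h
    · rw [abs_of_nonneg (hlb x y h), abs_of_nonneg (by linarith : (0:ℝ) ≤ x - y)]
      exact hub x y h
    · rw [abs_sub_comm, abs_sub_comm x y, abs_of_nonneg (hlb y x h),
        abs_of_nonneg (by linarith : (0:ℝ) ≤ y - x)]
      exact hub y x h
  have hcont : Continuous fun z : ℝ => z - α z / k :=
    continuous_id.sub (hlip.continuous.div_const k)
  have hc : (0:ℝ) < 1 - s / k := by
    rw [sub_pos, div_lt_one hk0]; exact hk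
  have htop : Tendsto (fun z : ℝ => z - α z / k) atTop atTop := by
    apply tendsto_atTop_mono' atTop (f₁ := fun x : ℝ => (1 - s / k) * x)
    · filter_upwards [eventually_ge_atTop (0:ℝ)] with x hx
      have h1 : α x ≤ s * x := by have := hub x 0 hx; simp [h0] at this; linarith
      have h2 : α x / k ≤ s * x / k := by gcongr
      have h3 : (1 - s / k) * x = x - s * x / k := by ring
      linarith
    · exact Tendsto.const_mul_atTop hc tendsto_id
  have hbot : Tendsto (fun z : ℝ => z - α z / k) atBot atBot := by
    apply tendsto_atBot_mono' atBot (f₁ := fun x : ℝ => (1 - s / k) * x)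
    · filter_upwards [eventually_le_atBot (0:ℝ)] with x hx
      have h1 : s * x ≤ α x := by have := hub 0 x hx; simp [h0] at this; linarith
      have h2 : s * x / k ≤ α x / k := by gcongr
      have h3 : (1 - s / k) * x = x - s * x / k := by ring
      linarith
    · exact Tendsto.const_mul_atBot hc tendsto_id
  exact ⟨hcont.surjective htop hbot, hmono⟩

theorem stmt_11 (αL αH : ℝ → ℝ) (s k u y : ℝ)
    (hslope_lo : ∀ x₁ x₂ : ℝ, x₁ ≠ x₂ →
      0 ≤ (αL x₁ - αL x₂) / (x₁ - x₂) ∧ (αL x₁ - αL x₂) / (x₁ - x₂) ≤ s)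
    (hslope_hi : ∀ x₁ x₂ : ℝ, x₁ ≠ x₂ →
      0 ≤ (αH x₁ - αH x₂) / (x₁ - x₂) ∧ (αH x₁ - αH x₂) / (x₁ - x₂) ≤ s)
    (hlo0 : αL 0 = 0) (hhi0 : αH 0 = 0)
    (hsector : ∀ x : ℝ, x ≠ 0 →
      0 ≤ αL x / x ∧ αL x / x ≤ αH x / x ∧ αH x / x ≤ s)
    (hk : k > s)
    (hu : u > 0)
    (hy : αL u ≤ y ∧ y ≤ αH u) :
    u - y / k > 0 ∧
    0 ≤ (αL ∘ Function.invFun (fun z : ℝ => z - αL z / k)) (u - y / k) / (u - y / k) ∧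
    (αL ∘ Function.invFun (fun z : ℝ => z - αL z / k)) (u - y / k) / (u - y / k)
      ≤ y / (u - y / k) ∧
    y / (u - y / k) ≤
      (αH ∘ Function.invFun (fun z : ℝ => z - αH z / k)) (u - y / k) / (u - y / k) := by
  have hs : 0 ≤ s := le_trans (hslope_lo 1 0 one_ne_zero).1 (hslope_lo 1 0 one_ne_zero).2
  have hk0 : 0 < k := lt_of_le_of_lt hs hk
  have hsecu := hsector u (ne_of_gt hu)
  have hαLu : 0 ≤ αL u := by
    have := hsecu.1; nlinarith [div_mul_cancel₀ (αL u) (ne_of_gt hu)]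
  have hαHu : αH u ≤ s * u := by
    have := hsecu.2.2; nlinarith [div_mul_cancel₀ (αH u) (ne_of_gt hu)]
  have hy0 : 0 ≤ y := le_trans hαLu hy.1
  have hv : 0 < u - y / k := by
    have : y / k < u := by
      rw [div_lt_iff₀ hk0]; nlinarith [hy.2]
    linarith
  set v := u - y / k with hvdef
  obtain ⟨surjL, monoL⟩ := aux_key αL s k hslope_lo hlo0 hk hs
  obtain ⟨surjH, monoH⟩ := aux_key αH s k hslope_hi hhi0 hk hs
  set wL := Function.invFun (fun z : ℝ => z - αL z / k) v with hwLdef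
  set wH := Function.invFun (fun z : ℝ => z - αH z / k) v with hwHdef
  have hgL : wL - αL wL / k = v := Function.invFun_eq (surjL v)
  have hgH : wH - αH wH / k = v := Function.invFun_eq (surjH v)
  have hwL0 : 0 < wL := by
    by_contra h
    push_neg at h
    have h2 := monoL.monotone h
    rw [hgL, hlo0] at h2
    simp at h2; linarith
  have hwH0 : 0 < wH := by
    by_contra h
    push_neg at h
    have h2 := monoH.monotone h
    rw [hgH, hhi0] at h2
    simp at h2; linarith
  have hαLwL : 0 ≤ αL wL := by
    have := (hsector wL (ne_of_gt hwL0)).1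
    nlinarith [div_mul_cancel₀ (αL wL) (ne_of_gt hwL0)]
  have hEqL : k * wL - αL wL = k * u - y := by
    have h := hgL
    rw [hvdef] at h
    field_simp at h
    linarith
  have hEqH : k * wH - αH wH = k * u - y := by
    have h := hgH
    rw [hvdef] at h
    field_simp at h
    linarith
  have hL : αL wL ≤ y := by
    by_contra h
    push_neg at h
    have hgt : u < wL := by nlinarith
    have := aux_ub αL s hslope_lo wL u (le_of_lt hgt)
    nlinarith [hy.1]
  have hH : y ≤ αH wH := by
    by_contra h
    push_neg at h
    have hlt : wH < u := by nlinarith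
    have := aux_ub αH s hslope_hi u wH (le_of_lt hlt)
    nlinarith [hy.2]
  refine ⟨hv, ?_, ?_, ?_⟩
  · simp only [Function.comp_apply, ← hwLdef]
    exact div_nonneg hαLwL (le_of_lt hv)
  · simp only [Function.comp_apply, ← hwLdef]
    gcongr
  · simp only [Function.comp_apply, ← hwHdef]
    gcongr
end
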